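/- Let ρ_t be the solution of dρ_t/dt = L(ρ_t) + Tr[J(ρ_t)]ρ_t − J(ρ_t) with state-valued initial condition. If ρ_{t₀} is a one-dimensional projector for some t₀ ≥ 0, then ρ_t is a one-dimensional projector (pure state) for all t ≥ t₀. -/

import Mathlib

open Matrix
open scoped ComplexOrder

/-- The vector field `f(ρ) = L(ρ) + Tr[J(ρ)]ρ − J(ρ)` of the deterministic part of the
jump Belavkin equation. -/
noncomputable def belavkinField (H₀ C ρ : Matrix (Fin 2) (Fin 2) ℂ) : Matrix (Fin 2) (Fin 2) ℂ :=
  ((-Complex.I) • (H₀ * ρ - ρ * H₀) - (1/2 : ℂ) • (Cᴴ * C * ρ + ρ * (Cᴴ * C)) + C * ρ * Cᴴ)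
    + (C * ρ * Cᴴ).trace • ρ - C * ρ * Cᴴ

/-- A pure state: a rank-one orthogonal projector `|x⟩⟨x|` with `‖x‖ = 1`. -/
def IsPureState (ρ : Matrix (Fin 2) (Fin 2) ℂ) : Prop :=
  ∃ x : EuclideanSpace ℂ (Fin 2), ‖x‖ = 1 ∧ ρ = vecMulVec x (star x)

/-! Along the flow the defects of purity obey linear differential equations with coefficients
continuous in time, so Grönwall's inequality keeps them at zero once they vanish at `t₀`:
`(tr ρ - 1)' = tr(CρC*) (tr ρ - 1)`, and, when `tr ρ = 1`, `E = ρ² - ρ` satisfies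
`E' = G E + E G* + 2 tr(CρC*) E + det ρ · adj(C*C)` with `G = -iH₀ - C*C/2`, where
`det ρ = -tr E / 2` by Cayley–Hamilton in dimension two. Hermiticity persists because the vector
field commutes with `ᴴ`, so `ρᴴ` solves the same locally Lipschitz equation as `ρ`. Finally a
Hermitian idempotent of trace one in dimension two is `|x⟩⟨x|` for a unit vector `x`. -/

open Set

section MatrixCalculus

variable {m n : Type*} {s : Set ℝ} {t : ℝ}

theorem hasDerivWithinAt_matrix_iff [Fintype n] {α : Type*} [NormedAddCommGroup α]
    [NormedSpace ℝ α]
    {ρ : ℝ → Matrix m n α} {ρ' : Matrix m n α} :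
    HasDerivWithinAt ρ ρ' s t ↔ ∀ i j, HasDerivWithinAt (fun u => ρ u i j) (ρ' i j) s t :=
  (hasDerivWithinAt_pi (E' := fun _ : m => n → α)).trans
    (forall_congr' fun _ => hasDerivWithinAt_pi)

variable {ρ : ℝ → Matrix n n ℂ} {ρ' : Matrix n n ℂ}

theorem HasDerivWithinAt.matrix_trace [Fintype n] (h : HasDerivWithinAt ρ ρ' s t) :
    HasDerivWithinAt (fun u => (ρ u).trace) ρ'.trace s t :=
  HasDerivWithinAt.fun_sum fun i _ => hasDerivWithinAt_matrix_iff.mp h i i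

theorem HasDerivWithinAt.matrix_conjTranspose [Fintype n] (h : HasDerivWithinAt ρ ρ' s t) :
    HasDerivWithinAt (fun u => (ρ u)ᴴ) ρ'ᴴ s t :=
  hasDerivWithinAt_matrix_iff.mpr fun i j => (hasDerivWithinAt_matrix_iff.mp h j i).star

end MatrixCalculus

section LinftyOpNorm

attribute [local instance] Matrix.linftyOpNormedAddCommGroup

variable {m n α : Type*} [Fintype m] [Fintype n] [NormedAddCommGroup α]

theorem norm_apply_le_linfty_opNorm (A : Matrix m n α) (i : m) (j : n) : ‖A i j‖ ≤ ‖A‖ := by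
  rw [linfty_opNorm_def, ← coe_nnnorm, NNReal.coe_le_coe]
  exact (Finset.single_le_sum (fun _ _ => bot_le) (Finset.mem_univ j)).trans
    (Finset.le_sup (f := fun i => ∑ k, ‖A i k‖₊) (Finset.mem_univ i))

theorem norm_trace_le_linfty_opNorm (A : Matrix n n α) :
    ‖A.trace‖ ≤ Fintype.card n * ‖A‖ := by
  simpa [Matrix.trace] using
    norm_sum_le_of_le Finset.univ fun i _ => norm_apply_le_linfty_opNorm A i i

end LinftyOpNorm

theorem eqOn_of_hasDerivWithinAt_of_contDiff {E : Type*} [NormedAddCommGroup E]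
    [NormedSpace ℝ E] {F : E → E} (hF : ContDiff ℝ 1 F) {f g : ℝ → E} {a b : ℝ}
    (hf : ContinuousOn f (Icc a b)) (hf' : ∀ t ∈ Ico a b, HasDerivWithinAt f (F (f t)) (Ici t) t)
    (hg : ContinuousOn g (Icc a b)) (hg' : ∀ t ∈ Ico a b, HasDerivWithinAt g (F (g t)) (Ici t) t)
    (ha : f a = g a) : EqOn f g (Icc a b) := by
  obtain ⟨K, hK⟩ := hF.locallyLipschitz.locallyLipschitzOn.exists_lipschitzOnWith_of_compact
    ((isCompact_Icc.image_of_continuousOn hf).union (isCompact_Icc.image_of_continuousOn hg))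
  exact ODE_solution_unique_of_mem_Icc_right (fun _ _ => hK) hf hf'
    (fun t ht => Or.inl ⟨t, Ico_subset_Icc_self ht, rfl⟩) hg hg'
    (fun t ht => Or.inr ⟨t, Ico_subset_Icc_self ht, rfl⟩) ha

local notation "𝕄" => Matrix (Fin 2) (Fin 2) ℂ

theorem trace_belavkinField (H₀ C ρ : 𝕄) :
    (belavkinField H₀ C ρ).trace = (C * ρ * Cᴴ).trace * (ρ.trace - 1) := by
  simp only [belavkinField, trace_fin_two, Matrix.add_apply, Matrix.sub_apply, Matrix.smul_apply,
    mul_apply, conjTranspose_apply, Fin.sum_univ_two, smul_eq_mul]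
  ring

theorem conjTranspose_belavkinField {H₀ : 𝕄} (hH : H₀.IsHermitian) (C ρ : 𝕄) :
    (belavkinField H₀ C ρ)ᴴ = belavkinField H₀ C ρᴴ := by
  have hI : star Complex.I = -Complex.I := Complex.conj_I
  have htr : star (C * (ρ * Cᴴ)).trace = (C * (ρᴴ * Cᴴ)).trace := by
    rw [← trace_conjTranspose, conjTranspose_mul, conjTranspose_mul, conjTranspose_conjTranspose,
      Matrix.mul_assoc]
  simp only [belavkinField, conjTranspose_add, conjTranspose_sub, conjTranspose_smul,
    conjTranspose_mul, conjTranspose_conjTranspose, hH.eq, star_neg, hI, star_div₀, star_one,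
    star_ofNat, Matrix.mul_assoc, htr]
  module

theorem belavkinField_mul_add_mul_belavkinField_sub (H₀ C ρ : 𝕄) :
    belavkinField H₀ C ρ * ρ + ρ * belavkinField H₀ C ρ - belavkinField H₀ C ρ =
      ((-Complex.I) • H₀ - (1/2 : ℂ) • (Cᴴ * C)) * (ρ * ρ - ρ)
      + (ρ * ρ - ρ) * (Complex.I • H₀ - (1/2 : ℂ) • (Cᴴ * C))
      + (2 * (C * ρ * Cᴴ).trace) • (ρ * ρ - ρ)
      + ρ.det • ((Cᴴ * C).trace • 1 - Cᴴ * C) := by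
  ext i j
  fin_cases i <;> fin_cases j <;>
  · simp only [belavkinField, trace_fin_two, det_fin_two, mul_apply, Fin.sum_univ_two,
      conjTranspose_apply, Matrix.add_apply, Matrix.sub_apply, Matrix.smul_apply, smul_eq_mul,
      one_apply_eq, one_apply_ne, ne_eq, zero_ne_one, one_ne_zero, not_false_eq_true, Fin.zero_eta,
      Fin.mk_one, Fin.isValue]
    ring

theorem det_eq_neg_trace_mul_self_sub_div_two {ρ : 𝕄} (h : ρ.trace = 1) :
    ρ.det = -(ρ * ρ - ρ).trace / 2 := by
  rw [trace_fin_two] at h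
  simp only [det_fin_two, trace_fin_two, Matrix.sub_apply, mul_apply, Fin.sum_univ_two]
  linear_combination (ρ 0 0 + ρ 1 1) / 2 * h

theorem mul_apply_self_eq_mul_of_det_eq_zero {P : 𝕄} (h : P.det = 0) (i j k : Fin 2) :
    P i k * P j j = P i j * P j k := by
  rw [det_fin_two] at h
  fin_cases i <;> fin_cases j <;> fin_cases k <;> simp only [Fin.zero_eta, Fin.mk_one] <;>
    first | ring1 | linear_combination h

section PureStates

theorem dotProduct_star_eq_one {𝕜 ι : Type*} [RCLike 𝕜] [Fintype ι] {x : EuclideanSpace 𝕜 ι}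
    (hx : ‖x‖ = 1) :
    x.ofLp ⬝ᵥ star x.ofLp = 1 := by
  rw [← EuclideanSpace.inner_eq_star_dotProduct, inner_self_eq_norm_sq_to_K, hx]; simp

variable {ρ : 𝕄}

theorem isPureState_of_isHermitian_of_mul_self (hH : ρ.IsHermitian) (hρ : ρ * ρ = ρ)
    (htr : ρ.trace = 1) : IsPureState ρ := by
  have hconj : ∀ i k, star (ρ i k) = ρ k i := fun i k => by
    rw [← conjTranspose_apply, hH.eq]
  obtain ⟨j, hj⟩ : ∃ j, ρ j j ≠ 0 := by
    by_contra! h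
    simp [trace_fin_two, h] at htr
  set r : ℝ := ∑ i : Fin 2, ‖ρ i j‖ ^ 2
  have hdiag : ρ j j = r := by
    rw [← hρ, mul_apply, Complex.ofReal_sum]
    refine Finset.sum_congr rfl fun i _ => ?_
    rw [← hconj, Complex.ofReal_pow, ← Complex.conj_mul']
    rfl
  have hr : 0 < r :=
    lt_of_le_of_ne (by positivity) fun h => hj (by rw [hdiag, ← h, Complex.ofReal_zero])
  have hrank := mul_apply_self_eq_mul_of_det_eq_zero (j := j)
    (by rw [det_eq_neg_trace_mul_self_sub_div_two htr, hρ, sub_self, trace_zero]; simp)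
  refine ⟨(Real.sqrt r)⁻¹ • WithLp.toLp 2 (fun i => ρ i j), ?_, ?_⟩
  · simp only [norm_smul, EuclideanSpace.norm_eq, norm_inv, Real.norm_eq_abs,
      abs_of_nonneg (Real.sqrt_nonneg r)]
    exact inv_mul_cancel₀ (Real.sqrt_pos.mpr hr).ne'
  · ext i k
    simp only [vecMulVec_apply, WithLp.ofLp_smul, Pi.smul_apply, Pi.star_apply, star_smul,
      hconj, star_trivial]
    rw [smul_mul_smul_comm, ← hrank, hdiag, ← mul_inv, Real.mul_self_sqrt hr.le,
      Complex.real_smul, Complex.ofReal_inv, mul_comm,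
      mul_inv_cancel_right₀ (Complex.ofReal_ne_zero.mpr hr.ne')]

theorem isPureState_iff : IsPureState ρ ↔ ρ.IsHermitian ∧ ρ * ρ = ρ ∧ ρ.trace = 1 := by
  refine ⟨?_, fun ⟨hH, hρ, htr⟩ => isPureState_of_isHermitian_of_mul_self hH hρ htr⟩
  rintro ⟨x, hx, rfl⟩
  refine ⟨?_, ?_, ?_⟩
  · rw [IsHermitian, conjTranspose_vecMulVec, star_star]
  · rw [vecMulVec_mul_vecMulVec, dotProduct_comm, dotProduct_star_eq_one hx, one_smul]
  · rw [trace_vecMulVec, dotProduct_star_eq_one hx]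

end PureStates

section Dynamics

attribute [local instance] Matrix.linftyOpNormedAddCommGroup Matrix.linftyOpNormedSpace
  Matrix.linftyOpNormedRing Matrix.linftyOpNormedAlgebra

theorem contDiff_belavkinField (H₀ C : 𝕄) : ContDiff ℝ 1 (belavkinField H₀ C) := by
  have : ContDiff ℝ 1 (trace : 𝕄 → ℂ) :=
    (LinearMap.toContinuousLinearMap (traceLinearMap (Fin 2) ℝ ℂ)).contDiff
  unfold belavkinField
  fun_prop

theorem exists_norm_trace_conj_le (C : 𝕄) {ρ : ℝ → 𝕄} {a b : ℝ}
    (hρ : ContinuousOn ρ (Icc a b)) : ∃ K, ∀ t ∈ Icc a b, ‖(C * ρ t * Cᴴ).trace‖ ≤ K :=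
  isCompact_Icc.exists_bound_of_continuousOn <| continuous_id.matrix_trace.comp_continuousOn <|
    (continuousOn_const.mul hρ).mul continuousOn_const

variable {H₀ C : 𝕄} {ρ : ℝ → 𝕄} {a b : ℝ}

theorem trace_eq_one_of_hasDerivWithinAt_belavkinField (hρ : ContinuousOn ρ (Icc a b))
    (hρ' : ∀ t ∈ Ico a b, HasDerivWithinAt ρ (belavkinField H₀ C (ρ t)) (Ici t) t)
    (ha : (ρ a).trace = 1) : ∀ t ∈ Icc a b, (ρ t).trace = 1 := by
  obtain ⟨K, hK⟩ := exists_norm_trace_conj_le C hρ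
  have h := eq_zero_of_abs_deriv_le_mul_abs_self_of_eq_zero_right
    (f := fun t => (ρ t).trace - 1) (K := K)
    ((continuous_id.matrix_trace.comp_continuousOn hρ).sub continuousOn_const)
    (fun t ht => (hρ' t ht).matrix_trace.sub_const 1) (by simp [ha]) fun t ht => by
      rw [trace_belavkinField, norm_mul]
      exact mul_le_mul_of_nonneg_right (hK t (Ico_subset_Icc_self ht)) (norm_nonneg _)
  exact fun t ht => sub_eq_zero.mp (h t ht)

theorem isHermitian_of_hasDerivWithinAt_belavkinField (hH : H₀.IsHermitian)
    (hρ : ContinuousOn ρ (Icc a b))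
    (hρ' : ∀ t ∈ Ico a b, HasDerivWithinAt ρ (belavkinField H₀ C (ρ t)) (Ici t) t)
    (ha : (ρ a).IsHermitian) : ∀ t ∈ Icc a b, (ρ t).IsHermitian :=
  fun _ ht => eqOn_of_hasDerivWithinAt_of_contDiff (contDiff_belavkinField H₀ C)
    (f := fun t => (ρ t)ᴴ) (continuous_id.matrix_conjTranspose.comp_continuousOn hρ)
    (fun t ht => conjTranspose_belavkinField hH C (ρ t) ▸ (hρ' t ht).matrix_conjTranspose)
    hρ hρ' ha ht

theorem mul_self_eq_of_hasDerivWithinAt_belavkinField (hρ : ContinuousOn ρ (Icc a b))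
    (hρ' : ∀ t ∈ Ico a b, HasDerivWithinAt ρ (belavkinField H₀ C (ρ t)) (Ici t) t)
    (htr : ∀ t ∈ Icc a b, (ρ t).trace = 1) (ha : ρ a * ρ a = ρ a) :
    ∀ t ∈ Icc a b, ρ t * ρ t = ρ t := by
  obtain ⟨K, hK⟩ := exists_norm_trace_conj_le C hρ
  set A : 𝕄 := (-Complex.I) • H₀ - (1/2 : ℂ) • (Cᴴ * C)
  set B : 𝕄 := Complex.I • H₀ - (1/2 : ℂ) • (Cᴴ * C)
  set Z : 𝕄 := (Cᴴ * C).trace • 1 - Cᴴ * C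
  have h := eq_zero_of_abs_deriv_le_mul_abs_self_of_eq_zero_right
    (f := fun t => ρ t * ρ t - ρ t) (K := ‖A‖ + ‖B‖ + 2 * K + ‖Z‖)
    ((hρ.mul hρ).sub hρ) (fun t ht => ((hρ' t ht).mul (hρ' t ht)).sub (hρ' t ht))
    (by simp [ha]) fun t ht => by
      have ht' := Ico_subset_Icc_self ht
      set E := ρ t * ρ t - ρ t
      have hτ : ‖2 * (C * ρ t * Cᴴ).trace‖ ≤ 2 * K := by
        rw [norm_mul, Complex.norm_two]; linarith [hK t ht']
      have hdet : ‖(ρ t).det‖ ≤ ‖E‖ := by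
        rw [det_eq_neg_trace_mul_self_sub_div_two (htr t ht'), norm_div, norm_neg,
          Complex.norm_two, div_le_iff₀ two_pos]
        have := norm_trace_le_linfty_opNorm E
        rw [Fintype.card_fin, Nat.cast_ofNat] at this
        linarith
      rw [belavkinField_mul_add_mul_belavkinField_sub]
      calc _ ≤ ‖A * E‖ + ‖E * B‖ + ‖(2 * (C * ρ t * Cᴴ).trace) • E‖ + ‖(ρ t).det • Z‖ :=
            norm_add₄_le
        _ ≤ ‖A‖ * ‖E‖ + ‖E‖ * ‖B‖ + 2 * K * ‖E‖ + ‖E‖ * ‖Z‖ := by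
            rw [norm_smul, norm_smul]
            gcongr
            · exact norm_mul_le _ _
            · exact norm_mul_le _ _
        _ = (‖A‖ + ‖B‖ + 2 * K + ‖Z‖) * ‖E‖ := by ring
  exact fun t ht => sub_eq_zero.mp (h t ht)

end Dynamics

theorem stmt_6_general (H₀ C : Matrix (Fin 2) (Fin 2) ℂ) (hH : H₀.IsHermitian)
    (ρ : ℝ → Matrix (Fin 2) (Fin 2) ℂ)
    (hode : ∀ t ≥ (0:ℝ), ∀ i j, HasDerivWithinAt (fun s => ρ s i j)
      (belavkinField H₀ C (ρ t) i j) (Set.Ici 0) t)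
    (t₀ : ℝ) (ht₀ : 0 ≤ t₀) (hpure : IsPureState (ρ t₀)) :
    ∀ t ≥ t₀, IsPureState (ρ t) := by
  intro T hT
  have hρ : ContinuousOn ρ (Icc t₀ T) := fun t ht =>
    (hasDerivWithinAt_matrix_iff.mpr (hode t (ht₀.trans ht.1))).hasFDerivWithinAt
      |>.continuousWithinAt.mono fun _ hs => ht₀.trans (mem_Icc.mp hs).1
  have hρ' : ∀ t ∈ Ico t₀ T, HasDerivWithinAt ρ (belavkinField H₀ C (ρ t)) (Ici t) t :=
    fun t ht => hasDerivWithinAt_matrix_iff.mpr fun i j =>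
      (hode t (ht₀.trans ht.1) i j).mono (Ici_subset_Ici.mpr (ht₀.trans ht.1))
  obtain ⟨hherm, hidem, htr⟩ := isPureState_iff.mp hpure
  have htr' := trace_eq_one_of_hasDerivWithinAt_belavkinField hρ hρ' htr
  have hT' : T ∈ Icc t₀ T := ⟨hT, le_rfl⟩
  exact isPureState_iff.mpr
    ⟨isHermitian_of_hasDerivWithinAt_belavkinField hH hρ hρ' hherm T hT',
      mul_self_eq_of_hasDerivWithinAt_belavkinField hρ hρ' htr' hidem T hT', htr' T hT'⟩

/-- If the solution of `dρ_t/dt = L(ρ_t) + Tr[J(ρ_t)]ρ_t − J(ρ_t)` with state-valued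
initial condition is a one-dimensional projector at some time `t₀ ≥ 0`, then it is a
one-dimensional projector (pure state) for all `t ≥ t₀`. -/
theorem stmt_6 (H₀ C : Matrix (Fin 2) (Fin 2) ℂ) (hH : H₀.IsHermitian)
    (ρ : ℝ → Matrix (Fin 2) (Fin 2) ℂ)
    (h₀ : (ρ 0).PosSemidef ∧ (ρ 0).trace = 1)
    (hode : ∀ t ≥ (0:ℝ), ∀ i j, HasDerivWithinAt (fun s => ρ s i j)
      (belavkinField H₀ C (ρ t) i j) (Set.Ici 0) t)
    (t₀ : ℝ) (ht₀ : 0 ≤ t₀) (hpure : IsPureState (ρ t₀)) :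
    ∀ t ≥ t₀, IsPureState (ρ t) :=
  stmt_6_general H₀ C hH ρ hode t₀ ht₀ hpure
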